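/- Let ρ, σ be quantum states on ℂ^d with (1/2)‖ρ − σ‖₁ ≤ ε. Then the von Neumann entropy satisfies |S(ρ) − S(σ)| ≤ g(ε) + ε·log d. -/

import Mathlib

open scoped BigOperators ComplexOrder Classical

noncomputable section

/-- Shannon entropy of a finitely supported distribution, with `0 log 0 = 0`. -/
def shannonEntropy {ι : Type*} [Fintype ι] (p : ι → ℝ) : ℝ :=
  -∑ i, p i * Real.log (p i)

/-- A quantum state: positive semidefinite with unit trace. -/
def IsState {n : Type*} [Fintype n] (ρ : Matrix n n ℂ) : Prop :=
  ρ.PosSemidef ∧ ρ.trace = 1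

/-- A POVM: positive semidefinite elements summing to the identity. -/
def IsPOVM {ι n : Type*} [Fintype ι] [Fintype n] [DecidableEq n]
    (M : ι → Matrix n n ℂ) : Prop :=
  (∀ i, (M i).PosSemidef) ∧ ∑ i, M i = 1

/-- Observational entropy `S_M(ρ) = -∑ p_i log (p_i / V_i)`. -/
def obsEntropy {ι n : Type*} [Fintype ι] [Fintype n]
    (M : ι → Matrix n n ℂ) (ρ : Matrix n n ℂ) : ℝ :=
  -∑ i, ((M i * ρ).trace.re * Real.log ((M i * ρ).trace.re / (M i).trace.re))

/-- The function `g(x) = -x log x + (1+x) log(1+x)`. -/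
def gFun (x : ℝ) : ℝ := -(x * Real.log x) + (1 + x) * Real.log (1 + x)

/-- The positive semidefinite square root (Mathlib's former `Matrix.PosSemidef.sqrt`). -/
def Matrix.PosSemidef.sqrt {n 𝕜 : Type*} [Fintype n] [DecidableEq n] [RCLike 𝕜]
    {A : Matrix n n 𝕜} (hA : A.PosSemidef) : Matrix n n 𝕜 :=
  (hA.1.eigenvectorUnitary : Matrix n n 𝕜) *
    Matrix.diagonal ((↑) ∘ (fun x : ℝ => Real.sqrt x) ∘ hA.1.eigenvalues) *
    (star hA.1.eigenvectorUnitary : Matrix n n 𝕜)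

/-- Trace norm of a square complex matrix. -/
def traceNorm {n : Type*} [Fintype n] [DecidableEq n] (X : Matrix n n ℂ) : ℝ :=
  ((Matrix.posSemidef_conjTranspose_mul_self X).sqrt).trace.re

/-- Matrix logarithm of a Hermitian matrix via the spectral decomposition,
with the convention `log 0 = 0` on the kernel; junk value `0` on non-Hermitian input. -/
def matLog {n : Type*} [Fintype n] [DecidableEq n] (A : Matrix n n ℂ) : Matrix n n ℂ :=
  if hA : A.IsHermitian then
    (hA.eigenvectorUnitary : Matrix n n ℂ) *
      Matrix.diagonal (fun i => (Real.log (hA.eigenvalues i) : ℂ)) *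
      (star (hA.eigenvectorUnitary : Matrix n n ℂ))
  else 0

/-- Von Neumann entropy `S(ρ) = -tr(ρ log ρ)`. -/
def vnEntropy {n : Type*} [Fintype n] [DecidableEq n] (ρ : Matrix n n ℂ) : ℝ :=
  -((ρ * matLog ρ).trace.re)

/-- Quantum relative entropy, as an extended real number: `tr(μ (log μ - log ν))` when
`supp μ ⊆ supp ν` (both Hermitian), and `+∞` otherwise. -/
def qRelEntropy {n : Type*} [Fintype n] [DecidableEq n] (μ ν : Matrix n n ℂ) : EReal :=
  if μ.IsHermitian ∧ ν.IsHermitian ∧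
      LinearMap.range (Matrix.toLin' μ) ≤ LinearMap.range (Matrix.toLin' ν) then
    (((μ * (matLog μ - matLog ν)).trace.re : ℝ) : EReal)
  else ⊤

/-- Real-valued quantum relative entropy `tr(μ (log μ - log ν))` (meaningful when
`supp μ ⊆ supp ν`). -/
def qRelEntropyR {n : Type*} [Fintype n] [DecidableEq n] (μ ν : Matrix n n ℂ) : ℝ :=
  (μ * (matLog μ - matLog ν)).trace.re

/-!
Measure `ρ` in an eigenbasis of `σ`, getting a distribution `p`; measuring `σ` there gives its
spectrum `q`. The outcome distribution of a state is its spectrum mixed by a doubly stochastic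
(unistochastic) matrix, so measuring can only raise the entropy, `S(ρ) ≤ H(p)` while
`S(σ) = H(q)`, and can only shrink the trace distance, `½‖p - q‖₁ ≤ ½‖ρ - σ‖₁`. This reduces the
claim to the classical bound `H(p) - H(q) ≤ g(t) + t log d` for `t = ½‖p - q‖₁`, and `g` is
increasing.

For the classical bound, `m = p + (q - p)⁺ = q + (q - p)⁻` has mass `1 + t`. Concavity of
`x ↦ -x log x` gives `H(p) ≤ H(m) + (1 + t) log (1 + t)`, its subadditivity gives
`H(m) ≤ H(q) + H((q - p)⁻)`, and a vector of mass `t` on `d` points has `H ≤ -t log t + t log d`.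
-/

open Real Matrix

lemma Real.negMulLog_add_le {x y : ℝ} (hx : 0 ≤ x) (hy : 0 ≤ y) :
    negMulLog (x + y) ≤ negMulLog x + negMulLog y := by
  rcases hx.eq_or_lt with rfl | hx
  · simp
  rcases hy.eq_or_lt with rfl | hy
  · simp
  have hlx : log x ≤ log (x + y) := log_le_log hx (by linarith)
  have hly : log y ≤ log (x + y) := log_le_log hy (by linarith)
  simp only [negMulLog, neg_mul]
  nlinarith

lemma Real.negMulLog_le_negMulLog_add {x y s : ℝ} (hx : 0 ≤ x) (hy : 0 ≤ y) (hys : y ≤ s) :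
    negMulLog x ≤ negMulLog (x + y) + (x + y) * log (1 + s) := by
  rcases (hy.trans hys).eq_or_lt with rfl | hs
  · obtain rfl : y = 0 := le_antisymm hys hy
    simp
  set M := 1 + s
  have hM : 0 < M := by positivity
  -- `(x + y) / M` is the mixture of `x` and `y / s ∈ [0, 1]` with weights `1 / M` and `s / M`
  have hconc := concaveOn_negMulLog.2 (Set.mem_Ici.2 hx) (Set.mem_Ici.2 (div_nonneg hy hs.le))
    (inv_pos.2 hM).le (div_pos hs hM).le (by field_simp; ring)
  have hmix : M⁻¹ • x + (s / M) • (y / s) = M⁻¹ * (x + y) := by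
    simp only [smul_eq_mul]; field_simp
  have hscale : negMulLog (M⁻¹ * (x + y)) = M⁻¹ * (negMulLog (x + y) + (x + y) * log M) := by
    rw [mul_comm, negMulLog_mul]; simp only [negMulLog, log_inv]; ring
  have hy' : 0 ≤ negMulLog (y / s) := negMulLog_nonneg (by positivity) ((div_le_one hs).2 hys)
  rw [hmix, hscale, smul_eq_mul, smul_eq_mul] at hconc
  have := mul_nonneg (div_pos hs hM).le hy'
  rw [← mul_le_mul_iff_right₀ (inv_pos.2 hM)]
  linarith

lemma Real.sum_negMulLog_le {ι : Type*} [Fintype ι] {x : ι → ℝ} (hx : ∀ i, 0 ≤ x i) :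
    ∑ i, negMulLog (x i) ≤ negMulLog (∑ i, x i) + (∑ i, x i) * log (Fintype.card ι) := by
  set N : ℝ := (Fintype.card ι : ℝ)
  rcases isEmpty_or_nonempty ι with hι | hι
  · simp
  have hN : 0 < N := by simp [N, Fintype.card_pos]
  have hjensen := concaveOn_negMulLog.le_map_sum (t := Finset.univ) (w := fun _ => N⁻¹) (p := x)
    (fun _ _ => by positivity) (by simp [N, hN.ne']) (fun i _ => hx i)
  simp only [smul_eq_mul, ← Finset.mul_sum] at hjensen
  have hscale : N * negMulLog (N⁻¹ * ∑ i, x i) = negMulLog (∑ i, x i) + (∑ i, x i) * log N := by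
    rw [mul_comm, negMulLog_mul, negMulLog, log_inv]
    field_simp
    ring
  rw [← hscale, ← mul_le_mul_iff_right₀ (inv_pos.2 hN), ← mul_assoc, inv_mul_cancel₀ hN.ne',
    one_mul]
  exact hjensen

lemma ConcaveOn.map_add_sub_map_le_of_le {f : ℝ → ℝ} {s : Set ℝ} (hf : ConcaveOn ℝ s f)
    {x y δ : ℝ} (hx : x ∈ s) (hxδ : x + δ ∈ s) (hy : y ∈ s) (hyδ : y + δ ∈ s)
    (hxy : x ≤ y) (hδ : 0 ≤ δ) :
    f (y + δ) - f y ≤ f (x + δ) - f x := by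
  rcases hδ.eq_or_lt with rfl | hδ
  · simp
  have h₁ : slope f x (y + δ) ≤ slope f x (x + δ) :=
    hf.slope_anti hx ⟨hxδ, by simp; linarith⟩ ⟨hyδ, by simp; linarith⟩ (by linarith)
  have h₂ : slope f (y + δ) y ≤ slope f (y + δ) x :=
    hf.slope_anti hyδ ⟨hx, by simp; linarith⟩ ⟨hy, by simp; linarith⟩ hxy
  rw [slope_comm f (y + δ) x] at h₂
  have h := h₂.trans h₁
  simp only [slope_def_field] at h
  rw [show y - (y + δ) = -δ by ring, show x + δ - x = δ by ring, div_neg, ← neg_div, neg_sub,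
    div_le_div_iff_of_pos_right hδ] at h
  exact h

lemma gFun_eq_negMulLog_sub (x : ℝ) : gFun x = negMulLog x - negMulLog (1 + x) := by
  simp only [gFun, negMulLog, neg_mul]; ring

lemma gFun_mono {s t : ℝ} (hs : 0 ≤ s) (hst : s ≤ t) : gFun s ≤ gFun t := by
  have := concaveOn_negMulLog.map_add_sub_map_le_of_le (x := s) (y := 1 + s) (δ := t - s)
    hs (by simp; linarith) (by simp; linarith) (by simp; linarith) (by linarith) (by linarith)
  simp only [gFun_eq_negMulLog_sub]
  ring_nf at this ⊢
  linarith

lemma shannonEntropy_eq_sum_negMulLog {ι : Type*} [Fintype ι] (p : ι → ℝ) :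
    shannonEntropy p = ∑ i, negMulLog (p i) := by
  simp [shannonEntropy, negMulLog, Finset.sum_neg_distrib]

lemma sum_posPart_sub_eq_and_sum_negPart_sub_eq {ι : Type*} [Fintype ι] {p q : ι → ℝ}
    (hpq : ∑ i, p i = ∑ i, q i) :
    ∑ i, (q i - p i)⁺ = (1 / 2) * ∑ i, |p i - q i| ∧
      ∑ i, (q i - p i)⁻ = (1 / 2) * ∑ i, |p i - q i| := by
  have hsub : ∑ i, (q i - p i)⁺ - ∑ i, (q i - p i)⁻ = 0 := by
    rw [← Finset.sum_sub_distrib]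
    simp only [posPart_sub_negPart, Finset.sum_sub_distrib, hpq, sub_self]
  have hadd : ∑ i, (q i - p i)⁺ + ∑ i, (q i - p i)⁻ = ∑ i, |p i - q i| := by
    rw [← Finset.sum_add_distrib]
    simp only [posPart_add_negPart, abs_sub_comm (q _)]
  constructor <;> linarith

theorem shannonEntropy_sub_le {ι : Type*} [Fintype ι] {p q : ι → ℝ}
    (hp : ∀ i, 0 ≤ p i) (hq : ∀ i, 0 ≤ q i) (hp1 : ∑ i, p i = 1) (hq1 : ∑ i, q i = 1)
    {ε : ℝ} (hε : (1 / 2) * ∑ i, |p i - q i| ≤ ε) :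
    shannonEntropy p - shannonEntropy q ≤ gFun ε + ε * log (Fintype.card ι) := by
  set t := (1 / 2) * ∑ i, |p i - q i|
  set a : ι → ℝ := fun i => (q i - p i)⁺
  set b : ι → ℝ := fun i => (q i - p i)⁻
  obtain ⟨hsum_a, hsum_b⟩ : ∑ i, a i = t ∧ ∑ i, b i = t :=
    sum_posPart_sub_eq_and_sum_negPart_sub_eq (hp1.trans hq1.symm)
  have ha : ∀ i, 0 ≤ a i := fun i => posPart_nonneg _
  have hab : ∀ i, p i + a i = q i + b i := fun i => by
    linarith [posPart_sub_negPart (q i - p i)]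
  have ht : 0 ≤ t := hsum_a ▸ Finset.sum_nonneg fun i _ => ha i
  have hp_le : ∑ i, negMulLog (p i) ≤ ∑ i, negMulLog (p i + a i) + (1 + t) * log (1 + t) := by
    have h := Finset.sum_le_sum fun i (_ : i ∈ Finset.univ) =>
      negMulLog_le_negMulLog_add (hp i) (ha i)
        (hsum_a ▸ Finset.single_le_sum (fun j _ => ha j) (Finset.mem_univ i))
    rwa [Finset.sum_add_distrib, ← Finset.sum_mul, Finset.sum_add_distrib, hp1, hsum_a] at h
  have hm_le : ∑ i, negMulLog (p i + a i) ≤ ∑ i, negMulLog (q i) + ∑ i, negMulLog (b i) := by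
    simp only [hab, ← Finset.sum_add_distrib]
    exact Finset.sum_le_sum fun i _ => negMulLog_add_le (hq i) (negPart_nonneg _)
  have hb_le := sum_negMulLog_le (x := b) fun i => negPart_nonneg _
  rw [hsum_b] at hb_le
  have hg : negMulLog t + (1 + t) * log (1 + t) ≤ gFun ε := by
    simpa only [gFun, negMulLog, neg_mul] using gFun_mono ht hε
  have hlog : t * log (Fintype.card ι) ≤ ε * log (Fintype.card ι) :=
    mul_le_mul_of_nonneg_right hε (log_natCast_nonneg _)
  rw [shannonEntropy_eq_sum_negMulLog, shannonEntropy_eq_sum_negMulLog]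
  linarith

lemma ConvexOn.sum_map_mulVec_le {n : Type*} [Fintype n] [DecidableEq n] {f : ℝ → ℝ}
    {s : Set ℝ} (hf : ConvexOn ℝ s f) {B : Matrix n n ℝ} (hB : B ∈ doublyStochastic ℝ n)
    {x : n → ℝ} (hx : ∀ j, x j ∈ s) :
    ∑ i, f ((B *ᵥ x) i) ≤ ∑ j, f (x j) :=
  calc ∑ i, f ((B *ᵥ x) i) ≤ ∑ i, (B *ᵥ (f ∘ x)) i :=
        Finset.sum_le_sum fun i _ => by
          simpa only [mulVec, dotProduct, smul_eq_mul, Function.comp_apply] using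
            hf.map_sum_le (fun j _ => nonneg_of_mem_doublyStochastic hB)
              (sum_row_of_mem_doublyStochastic hB i) fun j _ => hx j
    _ = ∑ j, f (x j) := sum_mulVec_of_mem_doublyStochastic hB

namespace Matrix

variable {n 𝕜 : Type*} [Fintype n] [DecidableEq n] [RCLike 𝕜] {A : Matrix n n 𝕜}

lemma IsHermitian.trace_cfc (hA : A.IsHermitian) (f : ℝ → ℝ) :
    (cfc f A).trace = ∑ i, (f (hA.eigenvalues i) : 𝕜) := by
  rw [hA.cfc_eq, IsHermitian.cfc, Unitary.conjStarAlgAut_apply, trace_mul_cycle,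
    Unitary.coe_star_mul_self, one_mul, trace_diagonal]
  rfl

lemma PosSemidef.sqrt_eq_cfc (hA : A.PosSemidef) : hA.sqrt = cfc Real.sqrt A := by
  rw [hA.1.cfc_eq, IsHermitian.cfc, Unitary.conjStarAlgAut_apply]
  rfl

end Matrix

variable {n : Type*} [Fintype n] [DecidableEq n]

lemma matLog_eq_cfc {A : Matrix n n ℂ} (hA : A.IsHermitian) : matLog A = cfc log A := by
  rw [matLog, dif_pos hA, hA.cfc_eq, IsHermitian.cfc, Unitary.conjStarAlgAut_apply]
  rfl

lemma vnEntropy_eq_shannonEntropy {A : Matrix n n ℂ} (hA : A.IsHermitian) :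
    vnEntropy A = shannonEntropy hA.eigenvalues := by
  have hmul : A * matLog A = cfc (fun x => x * log x) A := by
    rw [matLog_eq_cfc hA, cfc_mul (fun x => x) log A
      (hg := A.finite_real_spectrum.continuousOn _), cfc_id' ℝ A]
  rw [vnEntropy, hmul, hA.trace_cfc, Complex.re_sum, shannonEntropy]
  rfl

lemma traceNorm_eq_trace_cfc_sqrt (A : Matrix n n ℂ) :
    traceNorm A = (cfc sqrt (A.conjTranspose * A)).trace.re := by
  rw [traceNorm, PosSemidef.sqrt_eq_cfc]

lemma traceNorm_eq_sum_abs_eigenvalues {A : Matrix n n ℂ} (hA : A.IsHermitian) :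
    traceNorm A = ∑ i, |hA.eigenvalues i| := by
  have hsq : A.conjTranspose * A = cfc (fun x : ℝ => x * x) A := by
    rw [hA.eq, cfc_mul (fun x => x) (fun x => x) A, cfc_id' ℝ A]
  have habs : cfc sqrt (A.conjTranspose * A) = cfc (fun x : ℝ => |x|) A := by
    rw [hsq, ← cfc_comp sqrt (fun x : ℝ => x * x) A]
    exact cfc_congr fun x _ => sqrt_mul_self_eq_abs x
  rw [traceNorm_eq_trace_cfc_sqrt, habs, hA.trace_cfc, Complex.re_sum]
  rfl

lemma traceNorm_sub_comm (A B : Matrix n n ℂ) : traceNorm (A - B) = traceNorm (B - A) := by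
  rw [traceNorm_eq_trace_cfc_sqrt, traceNorm_eq_trace_cfc_sqrt, ← neg_sub B A,
    conjTranspose_neg, neg_mul_neg]

namespace Matrix

def unistochastic (U : Matrix n n ℂ) : Matrix n n ℝ :=
  of fun i j => Complex.normSq (U i j)

lemma unistochastic_mem_doublyStochastic (U : unitaryGroup n ℂ) :
    (U : Matrix n n ℂ).unistochastic ∈ doublyStochastic ℝ n := by
  have hrow : ∀ i, ((U : Matrix n n ℂ) * star (U : Matrix n n ℂ)) i i =
      ∑ j, (Complex.normSq (U i j) : ℂ) := fun i => by
    simp only [mul_apply, star_apply, Complex.star_def, Complex.mul_conj]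
  have hcol : ∀ j, (star (U : Matrix n n ℂ) * U) j j = ∑ i, (Complex.normSq (U i j) : ℂ) :=
    fun j => by
      simp only [mul_apply, star_apply, Complex.star_def, mul_comm ((starRingEnd ℂ) _),
        Complex.mul_conj]
  rw [mem_doublyStochastic_iff_sum]
  refine ⟨fun i j => Complex.normSq_nonneg _, fun i => ?_, fun j => ?_⟩
  · have h := hrow i
    rw [Unitary.mul_star_self_of_mem U.2, one_apply_eq] at h
    exact_mod_cast h.symm
  · have h := hcol j
    rw [Unitary.star_mul_self_of_mem U.2, one_apply_eq] at h
    exact_mod_cast h.symm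

lemma re_diag_mul_diagonal_mul_star (W : Matrix n n ℂ) (d : n → ℝ) (i : n) :
    ((W * diagonal (fun j => (d j : ℂ)) * star W) i i).re = (W.unistochastic *ᵥ d) i := by
  simp only [mul_apply, diagonal_apply, mul_ite, mul_zero, Finset.sum_ite_eq', Finset.mem_univ,
    if_true, star_apply, Complex.re_sum, mulVec, dotProduct, unistochastic, of_apply]
  refine Finset.sum_congr rfl fun j _ => ?_
  rw [mul_right_comm, Complex.star_def, Complex.mul_conj, ← Complex.ofReal_mul, Complex.ofReal_re]

end Matrix

/-- The outcome distribution of measuring `ρ` in the orthonormal basis of columns of `V`. -/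
def basisDistribution (V : unitaryGroup n ℂ) (ρ : Matrix n n ℂ) : n → ℝ :=
  fun i => ((star (V : Matrix n n ℂ) * ρ * V) i i).re

lemma basisDistribution_sub (V : unitaryGroup n ℂ) (A B : Matrix n n ℂ) :
    basisDistribution V (A - B) = basisDistribution V A - basisDistribution V B := by
  ext i
  simp only [basisDistribution, Matrix.mul_sub, Matrix.sub_mul, Matrix.sub_apply, Complex.sub_re,
    Pi.sub_apply]

lemma basisDistribution_eigenvectorUnitary {A : Matrix n n ℂ} (hA : A.IsHermitian) :
    basisDistribution hA.eigenvectorUnitary A = hA.eigenvalues := by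
  have h := hA.conjStarAlgAut_star_eigenvectorUnitary
  rw [Unitary.conjStarAlgAut_apply, Unitary.coe_star, star_star] at h
  ext i
  rw [basisDistribution, h, diagonal_apply_eq]
  rfl

lemma Matrix.IsHermitian.basisDistribution_eq_mulVec {A : Matrix n n ℂ} (hA : A.IsHermitian)
    (V : unitaryGroup n ℂ) :
    basisDistribution V A =
      ((star V * hA.eigenvectorUnitary : unitaryGroup n ℂ) : Matrix n n ℂ).unistochastic *ᵥ
        hA.eigenvalues := by
  ext i
  rw [basisDistribution, ← re_diag_mul_diagonal_mul_star]
  conv_lhs => rw [hA.spectral_theorem, Unitary.conjStarAlgAut_apply]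
  simp only [Submonoid.coe_mul, Unitary.coe_star, star_mul, star_star, Matrix.mul_assoc]
  rfl

lemma sum_abs_basisDistribution_le_traceNorm {A : Matrix n n ℂ} (hA : A.IsHermitian)
    (V : unitaryGroup n ℂ) :
    ∑ i, |basisDistribution V A i| ≤ traceNorm A := by
  simpa only [hA.basisDistribution_eq_mulVec, Real.norm_eq_abs,
    ← traceNorm_eq_sum_abs_eigenvalues] using
    (convexOn_norm convex_univ).sum_map_mulVec_le (unistochastic_mem_doublyStochastic _)
      fun j => Set.mem_univ (hA.eigenvalues j)

lemma IsState.sum_eigenvalues {ρ : Matrix n n ℂ} (hρ : IsState ρ) :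
    ∑ i, hρ.1.1.eigenvalues i = 1 := by
  simpa using congrArg RCLike.re (hρ.1.1.trace_eq_sum_eigenvalues.symm.trans hρ.2)

lemma IsState.basisDistribution_nonneg {ρ : Matrix n n ℂ} (hρ : IsState ρ)
    (V : unitaryGroup n ℂ) (i : n) : 0 ≤ basisDistribution V ρ i := by
  rw [hρ.1.1.basisDistribution_eq_mulVec]
  exact Finset.sum_nonneg fun j _ => mul_nonneg
    (nonneg_of_mem_doublyStochastic (unistochastic_mem_doublyStochastic _))
    (hρ.1.eigenvalues_nonneg j)

lemma IsState.sum_basisDistribution {ρ : Matrix n n ℂ} (hρ : IsState ρ) (V : unitaryGroup n ℂ) :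
    ∑ i, basisDistribution V ρ i = 1 := by
  rw [hρ.1.1.basisDistribution_eq_mulVec,
    sum_mulVec_of_mem_doublyStochastic (unistochastic_mem_doublyStochastic _), hρ.sum_eigenvalues]

lemma IsState.vnEntropy_le_shannonEntropy_basisDistribution {ρ : Matrix n n ℂ}
    (hρ : IsState ρ) (V : unitaryGroup n ℂ) :
    vnEntropy ρ ≤ shannonEntropy (basisDistribution V ρ) := by
  have h := concaveOn_negMulLog.neg.sum_map_mulVec_le
    (unistochastic_mem_doublyStochastic (star V * hρ.1.1.eigenvectorUnitary))
    fun j => hρ.1.eigenvalues_nonneg j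
  simp only [Pi.neg_apply, Finset.sum_neg_distrib, neg_le_neg_iff] at h
  rwa [vnEntropy_eq_shannonEntropy hρ.1.1, shannonEntropy_eq_sum_negMulLog,
    shannonEntropy_eq_sum_negMulLog, hρ.1.1.basisDistribution_eq_mulVec V]

lemma vnEntropy_sub_le {ρ σ : Matrix n n ℂ} (hρ : IsState ρ) (hσ : IsState σ) {ε : ℝ}
    (hε : (1 / 2) * traceNorm (ρ - σ) ≤ ε) :
    vnEntropy ρ - vnEntropy σ ≤ gFun ε + ε * log (Fintype.card n) := by
  set V := hσ.1.1.eigenvectorUnitary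
  have hσV : vnEntropy σ = shannonEntropy (basisDistribution V σ) := by
    rw [basisDistribution_eigenvectorUnitary, vnEntropy_eq_shannonEntropy]
  have hdist : (1 / 2) * ∑ i, |basisDistribution V ρ i - basisDistribution V σ i| ≤ ε := by
    have h := sum_abs_basisDistribution_le_traceNorm (hρ.1.1.sub hσ.1.1) V
    rw [basisDistribution_sub] at h
    exact le_trans (by simpa using h) hε
  calc vnEntropy ρ - vnEntropy σ
      ≤ shannonEntropy (basisDistribution V ρ) - shannonEntropy (basisDistribution V σ) := by
        rw [hσV]; exact sub_le_sub_right (hρ.vnEntropy_le_shannonEntropy_basisDistribution V) _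
    _ ≤ gFun ε + ε * log (Fintype.card n) :=
        shannonEntropy_sub_le (hρ.basisDistribution_nonneg V) (hσ.basisDistribution_nonneg V)
          (hρ.sum_basisDistribution V) (hσ.sum_basisDistribution V) hdist

theorem vnEntropy_continuity {d : ℕ} (ρ σ : Matrix (Fin d) (Fin d) ℂ)
    (hρ : IsState ρ) (hσ : IsState σ)
    (ε : ℝ) (hε : (1/2) * traceNorm (ρ - σ) ≤ ε) :
    |vnEntropy ρ - vnEntropy σ| ≤ gFun ε + ε * Real.log d := by
  have hε' : (1/2) * traceNorm (σ - ρ) ≤ ε := traceNorm_sub_comm ρ σ ▸ hε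
  have h₁ := vnEntropy_sub_le hρ hσ hε
  have h₂ := vnEntropy_sub_le hσ hρ hε'
  rw [Fintype.card_fin] at h₁ h₂
  exact abs_sub_le_iff.2 ⟨h₁, h₂⟩
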